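/- Let S be a decision rule system with n(S) > 0 and Γ be an extended decision tree over S that solves the problem EAR(S). Then the number of terminal nodes of Γ is at least |S^max|. -/
import Mathlib


/-! Formalization of decision rule systems and decision trees
(Durdymyradov & Moshkov, "Greedy Algorithm for Inference of Decision Trees
from Decision Rule Systems"). -/

/-- Values of attributes: `some δ` is a natural number value, `none` is the
special symbol `*` (interpreted as a value not occurring in the system). -/
abbrev Val := Option ℕ

/-- A decision rule `(a_{i₁}=δ₁) ∧ ⋯ ∧ (a_{iₘ}=δₘ) → σ`: the left-hand side
is a finite set of equations (attribute, value), the right-hand side a decision. -/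
structure Rule where
  lhs : Finset (ℕ × ℕ)
  rhs : ℕ
deriving DecidableEq

namespace Rule

/-- `A(r)`: the set of attributes of a rule. -/
def attrs (r : Rule) : Finset ℕ := r.lhs.image Prod.fst

/-- `K(r)`: the equation system of the left-hand side of a rule. -/
def K (r : Rule) : Finset (ℕ × Val) := r.lhs.image (fun p => (p.1, some p.2))

/-- the length of a rule -/
def len (r : Rule) : ℕ := r.lhs.card

/-- A rule is wellformed if the attributes in its left-hand side are pairwise
different, i.e. each attribute carries at most one equation. -/
def WF (r : Rule) : Prop := ∀ p ∈ r.lhs, ∀ q ∈ r.lhs, p.1 = q.1 → p = q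

end Rule

/-- `A(S)`: the set of attributes of a system of decision rules. -/
def attrsS (S : Finset Rule) : Finset ℕ := S.biUnion Rule.attrs

/-- `n(S) = |A(S)|`. -/
def nS (S : Finset Rule) : ℕ := (attrsS S).card

/-- `d(S)`: maximum length of a rule of `S`. -/
def dS (S : Finset Rule) : ℕ := S.sup Rule.len

/-- `V_S(a)`: the set of values δ such that the equation `a = δ` occurs in `S`. -/
def VS (S : Finset Rule) (a : ℕ) : Finset ℕ :=
  S.biUnion (fun r => (r.lhs.filter (fun p => p.1 = a)).image Prod.snd)

/-- `EV_S(a) = V_S(a) ∪ {*}`. -/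
def EVS (S : Finset Rule) (a : ℕ) : Finset Val := insert none ((VS S a).image some)

/-- `k(S) = max{|V_S(a)| : a ∈ A(S)}`. -/
def kS (S : Finset Rule) : ℕ := (attrsS S).sup (fun a => (VS S a).card)

/-- A (wellformed) decision rule system: a finite nonempty set of wellformed rules. -/
def SysWF (S : Finset Rule) : Prop := S.Nonempty ∧ ∀ r ∈ S, r.WF

/-- An equation system is consistent if it does not assign two different values
to the same attribute. -/
def Consistent (E : Finset (ℕ × Val)) : Prop :=
  ∀ p ∈ E, ∀ q ∈ E, p.1 = q.1 → p.2 = q.2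

instance : DecidablePred Consistent := fun E => by unfold Consistent; infer_instance

/-- `r_α`: the rule obtained from `r` by deleting from its left-hand side all
equations belonging to `α`. -/
def Rule.restrict (r : Rule) (α : Finset (ℕ × Val)) : Rule :=
  ⟨r.lhs.filter (fun p => ((p.1, (some p.2 : Val)) ∉ α)), r.rhs⟩

/-- `S_α`: the set of rules `r_α` for `r ∈ S` with `K(r) ∪ α` consistent. -/
def sysRestrict (S : Finset Rule) (α : Finset (ℕ × Val)) : Finset Rule :=
  (S.filter (fun r => Consistent (r.K ∪ α))).image (fun r => r.restrict α)

/-- Extended decision trees: terminal nodes are labeled with sets of rules, and a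
working node is labeled with an attribute and has one child for each value
(only the children corresponding to values in `EV_S(a)` are relevant). -/
inductive DT where
  | leaf (τ : Finset Rule) : DT
  | node (a : ℕ) (c : Val → DT) : DT

/-- `Γ` is an extended decision tree over `S`: working nodes are labeled with
attributes of `A(S)` (with edges labeled by the elements of `EV_S(a)`),
terminal nodes with subsets of `S`. -/
def DT.Over (S : Finset Rule) : DT → Prop
  | .leaf τ => τ ⊆ S
  | .node a c => a ∈ attrsS S ∧ ∀ v ∈ EVS S a, DT.Over S (c v)

/-- `h(Γ)`: the maximum number of working nodes in a complete path of `Γ`. -/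
def DT.depth (S : Finset Rule) : DT → ℕ
  | .leaf _ => 0
  | .node a c => 1 + (EVS S a).sup (fun v => DT.depth S (c v))

/-- The number of terminal nodes of `Γ`. -/
def DT.numLeaves (S : Finset Rule) : DT → ℕ
  | .leaf _ => 1
  | .node a c => ∑ v ∈ EVS S a, DT.numLeaves S (c v)

/-- `Γ` solves `EAR(S)` starting from the already accumulated equation system `E`:
for every complete path `ξ` with consistent `K(ξ)`, every rule of the terminal
label `τ(ξ)` satisfies `K(r) ⊆ K(ξ)`, and every other rule of `S` has
`K(r) ∪ K(ξ)` inconsistent. -/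
def DT.SolvesFrom (S : Finset Rule) : DT → Finset (ℕ × Val) → Prop
  | .leaf τ, E => Consistent E →
      (∀ r ∈ τ, r.K ⊆ E) ∧ ∀ r ∈ S, r ∉ τ → ¬ Consistent (r.K ∪ E)
  | .node a c, E => ∀ v ∈ EVS S a, DT.SolvesFrom S (c v) (insert (a, v) E)

/-- `Γ` is a decision tree over `S` solving the problem `EAR(S)`. -/
def DT.SolvesEAR (S : Finset Rule) (Γ : DT) : Prop := Γ.Over S ∧ Γ.SolvesFrom S ∅

/-- `h_EAR(S)`: the minimum depth of a decision tree over `S` solving `EAR(S)`. -/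
noncomputable def hEAR (S : Finset Rule) : ℕ :=
  sInf {n | ∃ Γ : DT, DT.SolvesEAR S Γ ∧ DT.depth S Γ = n}

/-- A node cover of the hypergraph `G(S)`. -/
def IsNodeCover (S : Finset Rule) (B : Finset ℕ) : Prop :=
  B ⊆ attrsS S ∧ ∀ r ∈ S, r.attrs.Nonempty → (r.attrs ∩ B).Nonempty

/-- `β(S)`: the minimum cardinality of a node cover of `G(S)`. -/
noncomputable def betaS (S : Finset Rule) : ℕ :=
  sInf {k | ∃ B : Finset ℕ, IsNodeCover S B ∧ B.card = k}

/-- `M` is a possible choice of `S^max`: a set of rules of `S` of length `d(S)`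
containing exactly one representative from each equivalence class
(`r₁ ∼ r₂ iff K(r₁) = K(r₂)`) of the set of rules of length `d(S)`, and
no other rules. -/
def IsMaxSet (S M : Finset Rule) : Prop :=
  (∀ r ∈ M, r ∈ S ∧ r.len = dS S) ∧
  (∀ r ∈ S, r.len = dS S → ∃ r' ∈ M, r'.K = r.K) ∧
  (∀ r₁ ∈ M, ∀ r₂ ∈ M, r₁.K = r₂.K → r₁ = r₂)

/-- `δ̄ ∈ EV(S)`, a tuple represented as a function on attributes. -/
def InEV (S : Finset Rule) (f : ℕ → Val) : Prop := ∀ a ∈ attrsS S, f a ∈ EVS S a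

/-- `K(S, δ̄)`. -/
def KofTuple (S : Finset Rule) (f : ℕ → Val) : Finset (ℕ × Val) :=
  (attrsS S).image (fun a => (a, f a))

/-- The rule `r` is realizable for the tuple `δ̄`, i.e. `K(r) ⊆ K(S, δ̄)`. -/
def Realizable (S : Finset Rule) (f : ℕ → Val) (r : Rule) : Prop :=
  r.K ⊆ KofTuple S f

instance (S : Finset Rule) (f : ℕ → Val) : DecidablePred (Realizable S f) :=
  fun r => by unfold Realizable; infer_instance

open Classical in
/-- The oracle tuple associated to a rule `r`: the value of `a` in `r` if
`a ∈ A(r)`, and `*` otherwise. -/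
noncomputable def fR (r : Rule) (a : ℕ) : Val :=
  if h : ∃ δ, (a, δ) ∈ r.lhs then some h.choose else none

lemma fR_some {r : Rule} (hr : r.WF) {a δ : ℕ} :
    fR r a = some δ ↔ (a, δ) ∈ r.lhs := by
  constructor
  · intro h
    unfold fR at h
    split_ifs at h with hx
    · have hspec := hx.choose_spec
      simp only [Option.some.injEq] at h
      rwa [← h]
  · intro hmem
    have hx : ∃ δ', (a, δ') ∈ r.lhs := ⟨δ, hmem⟩
    have hspec := hx.choose_spec
    have := hr _ hspec _ hmem rfl
    simp only [fR, dif_pos hx]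
    exact congrArg some (congrArg Prod.snd this)

lemma fR_mem_EVS {S : Finset Rule} {r : Rule} (hr : r ∈ S) (a : ℕ) :
    fR r a ∈ EVS S a := by
  unfold fR
  split_ifs with h
  · apply Finset.mem_insert_of_mem
    apply Finset.mem_image_of_mem
    simp only [VS, Finset.mem_biUnion]
    refine ⟨r, hr, ?_⟩
    exact Finset.mem_image.mpr ⟨(a, h.choose), Finset.mem_filter.mpr ⟨h.choose_spec, rfl⟩, rfl⟩
  · exact Finset.mem_insert_self _ _

/-- `E` is compatible with the oracle of `r`. -/
def Compat (E : Finset (ℕ × Val)) (r : Rule) : Prop :=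
  ∀ p ∈ E, p.2 = fR r p.1

noncomputable instance (E : Finset (ℕ × Val)) : DecidablePred (Compat E) := by
  intro r; unfold Compat; infer_instance

lemma compat_union {E : Finset (ℕ × Val)} {r : Rule} (hr : r.WF)
    (hc : Compat E r) : ∀ p ∈ r.K ∪ E, p.2 = fR r p.1 := by
  intro p hp
  rcases Finset.mem_union.mp hp with hp | hp
  · obtain ⟨q, hq, hqe⟩ := Finset.mem_image.mp hp
    rw [← hqe]
    exact ((fR_some hr).mpr hq).symm
  · exact hc p hp

lemma compat_consistent {E : Finset (ℕ × Val)} {r : Rule}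
    (hc : Compat E r) : Consistent E := by
  intro p hp q hq h1
  rw [hc p hp, hc q hq, h1]

lemma key_lemma (S M : Finset Rule) (hWF : ∀ r ∈ S, r.WF) (hM : IsMaxSet S M) :
    ∀ (Γ : DT) (E : Finset (ℕ × Val)), Γ.SolvesFrom S E →
      (M.filter (fun r => Compat E r)).card ≤ Γ.numLeaves S := by
  intro Γ
  induction Γ with
  | leaf τ =>
    intro E hsol
    simp only [DT.numLeaves]
    apply Finset.card_le_one.mpr
    intro r₁ h₁ r₂ h₂
    obtain ⟨hr₁M, hc₁⟩ := Finset.mem_filter.mp h₁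
    obtain ⟨hr₂M, hc₂⟩ := Finset.mem_filter.mp h₂
    have hr₁S : r₁ ∈ S := (hM.1 r₁ hr₁M).1
    have hr₂S : r₂ ∈ S := (hM.1 r₂ hr₂M).1
    have hwf₁ := hWF r₁ hr₁S
    have hwf₂ := hWF r₂ hr₂S
    have hcons : Consistent E := compat_consistent hc₁
    obtain ⟨hin, hout⟩ := hsol hcons
    -- both rules belong to τ:
    have hmem : ∀ (r : Rule), r ∈ S → r.WF → Compat E r → r ∈ τ := by
      intro r hrS hwf hc
      by_contra hns
      exact hout r hrS hns (fun p hp q hq h1 => by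
        rw [compat_union hwf hc p hp, compat_union hwf hc q hq, h1])
    have hK₁ : r₁.K ⊆ E := hin r₁ (hmem r₁ hr₁S hwf₁ hc₁)
    have hK₂ : r₂.K ⊆ E := hin r₂ (hmem r₂ hr₂S hwf₂ hc₂)
    -- lhs r₁ ⊆ lhs r₂:
    have hsub : r₁.lhs ⊆ r₂.lhs := by
      intro q hq
      have : ((q.1, (some q.2 : Val))) ∈ r₁.K := Finset.mem_image_of_mem _ hq
      have hE := hK₁ this
      have := (hc₂ _ hE).symm
      simp only at this
      exact (fR_some hwf₂).mp this
    have hcard : r₂.lhs.card ≤ r₁.lhs.card := by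
      have e₁ : r₁.len = dS S := (hM.1 r₁ hr₁M).2
      have e₂ : r₂.len = dS S := (hM.1 r₂ hr₂M).2
      simp only [Rule.len] at e₁ e₂
      omega
    have hlhs : r₁.lhs = r₂.lhs := Finset.eq_of_subset_of_card_le hsub hcard
    exact hM.2.2 r₁ hr₁M r₂ hr₂M (by simp [Rule.K, hlhs])
  | node a c ih =>
    intro E hsol
    simp only [DT.numLeaves]
    have hsubset : M.filter (fun r => Compat E r) ⊆
        (EVS S a).biUnion (fun v => M.filter (fun r => Compat (insert (a, v) E) r)) := by
      intro r hr
      obtain ⟨hrM, hc⟩ := Finset.mem_filter.mp hr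
      apply Finset.mem_biUnion.mpr
      refine ⟨fR r a, fR_mem_EVS (hM.1 r hrM).1 a, Finset.mem_filter.mpr ⟨hrM, ?_⟩⟩
      intro p hp
      rcases Finset.mem_insert.mp hp with hp | hp
      · rw [hp]
      · exact hc p hp
    calc (M.filter (fun r => Compat E r)).card
        ≤ ((EVS S a).biUnion
            (fun v => M.filter (fun r => Compat (insert (a, v) E) r))).card :=
          Finset.card_le_card hsubset
      _ ≤ ∑ v ∈ EVS S a, (M.filter (fun r => Compat (insert (a, v) E) r)).card :=
          Finset.card_biUnion_le
      _ ≤ ∑ v ∈ EVS S a, (c v).numLeaves S := by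
          apply Finset.sum_le_sum
          intro v hv
          exact ih v _ (hsol v hv)

/-- Let `S` be a decision rule system with `n(S) > 0` and `Γ` be an extended
decision tree over `S` solving the problem `EAR(S)`. Then the number of
terminal nodes of `Γ` is at least `|S^max|`. -/
theorem card_SMax_le_numLeaves (S : Finset Rule) (hS : SysWF S) (hn : 0 < nS S)
    (Γ : DT) (hΓ : Γ.SolvesEAR S)
    (M : Finset Rule) (hM : IsMaxSet S M) :
    M.card ≤ Γ.numLeaves S := by
  have h := key_lemma S M hS.2 hM Γ ∅ hΓ.2
  rwa [Finset.filter_true_of_mem (fun r _ => by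
    intro p hp; exact absurd hp (Finset.notMem_empty p))] at h
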